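/- For θ ∈ (0,π), the quaternionic matrix A = [[e^{iθ}, 1],[0, e^{iθ}]] is not strongly reversible in SL(2,ℍ): there is no g ∈ SL(2,ℍ) with g² = I and gAg⁻¹ = A⁻¹. -/

import Mathlib

/-- The quaternion `cos θ + (sin θ) i`, i.e. `e^{iθ}` inside the quaternions. -/
noncomputable def eI (θ : ℝ) : Quaternion ℝ := ⟨Real.cos θ, Real.sin θ, 0, 0⟩

/-- The quaternion unit `j`. -/
def qj : Quaternion ℝ := ⟨0, 0, 1, 0⟩

/-- The standard complex embedding `Φ` of a 2×2 quaternionic matrix `A = A₁ + A₂ j`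
as the 4×4 complex block matrix `[[A₁, A₂], [-conj A₂, conj A₁]]`. -/
noncomputable def Phi (A : Matrix (Fin 2) (Fin 2) (Quaternion ℝ)) :
    Matrix (Fin 2 ⊕ Fin 2) (Fin 2 ⊕ Fin 2) ℂ :=
  Matrix.fromBlocks
    (A.map fun q => (⟨q.re, q.imI⟩ : ℂ))
    (A.map fun q => (⟨q.imJ, q.imK⟩ : ℂ))
    (-(A.map fun q => (⟨q.imJ, -q.imK⟩ : ℂ)))
    (A.map fun q => (⟨q.re, -q.imI⟩ : ℂ))

/-- The quaternionic determinant: the determinant of the complex embedding. -/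
noncomputable def detH (A : Matrix (Fin 2) (Fin 2) (Quaternion ℝ)) : ℂ := (Phi A).det

/-!
Write `u = e^{iθ}` and `ℍ = ℂ ⊕ ℂj`. The map `q ↦ u q u` multiplies the `ℂ`-part of `q` by
`u² ≠ 1` and fixes its `j`-part, since `u w u = w ū u = w` for `w ∈ ℂj`.

If an involution `g` conjugates `A = [[u, 1], [0, u]]` to `A⁻¹`, then `A g A = g`. Its
`(1,0)` entry `u x u = x` kills the `ℂ`-part of `x = g₁₀`, and the `j`-part of its `(1,1)` entry
`u x + u y u = y` kills the `j`-part of `u x`; hence `x = 0`. Then `y = g₁₁` satisfies `u y u = y`,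
so `y ∈ ℂj` is purely imaginary, while `(g²)₁₁ = x g₀₁ + y² = 1` forces `y² = 1`.
-/

open Real Quaternion

theorem mul_mul_eq_of_mul_self_eq_one_of_conj_eq_inv {M : Type*} [Monoid M] {g A B : M}
    (hg : g * g = 1) (hAB : A * B = 1) (hconj : g * A * g = B) : A * g * A = g :=
  calc A * g * A = A * g * A * (g * g) := by rw [hg, mul_one]
    _ = A * (g * A * g) * g := by simp only [mul_assoc]
    _ = g := by rw [hconj, hAB, one_mul]

section Parabolic

variable {R : Type*} [Semiring R] (u : R) (g : Matrix (Fin 2) (Fin 2) R)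

theorem parabolic_mul_mul_parabolic_apply_one_zero :
    (!![u, 1; 0, u] * g * !![u, 1; 0, u]) 1 0 = u * g 1 0 * u := by
  simp [Matrix.mul_apply, Fin.sum_univ_two, Matrix.vecMul, dotProduct]

theorem parabolic_mul_mul_parabolic_apply_one_one :
    (!![u, 1; 0, u] * g * !![u, 1; 0, u]) 1 1 = u * g 1 0 + u * g 1 1 * u := by
  simp [Matrix.mul_apply, Fin.sum_univ_two, Matrix.vecMul, dotProduct]

end Parabolic

section eI

variable (θ : ℝ)

@[simp] theorem eI_re : (eI θ).re = cos θ := rfl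
@[simp] theorem eI_imI : (eI θ).imI = sin θ := rfl
@[simp] theorem eI_imJ : (eI θ).imJ = 0 := rfl
@[simp] theorem eI_imK : (eI θ).imK = 0 := rfl

theorem eI_ne_zero : eI θ ≠ 0 := by
  rw [← normSq_ne_zero, normSq_def']
  simp

variable (q : ℍ[ℝ])

theorem re_eI_mul_mul_eI :
    (eI θ * q * eI θ).re = cos (2 * θ) * q.re - sin (2 * θ) * q.imI := by
  simp only [re_mul, imI_mul, imJ_mul, imK_mul, eI_re, eI_imI, eI_imJ, eI_imK, cos_two_mul,
    sin_two_mul]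
  linear_combination (-q.re) * sin_sq_add_cos_sq θ

theorem imI_eI_mul_mul_eI :
    (eI θ * q * eI θ).imI = sin (2 * θ) * q.re + cos (2 * θ) * q.imI := by
  simp only [re_mul, imI_mul, imJ_mul, imK_mul, eI_re, eI_imI, eI_imJ, eI_imK, cos_two_mul,
    sin_two_mul]
  linear_combination (-q.imI) * sin_sq_add_cos_sq θ

theorem imJ_eI_mul_mul_eI : (eI θ * q * eI θ).imJ = q.imJ := by
  simp only [re_mul, imI_mul, imJ_mul, imK_mul, eI_re, eI_imI, eI_imJ, eI_imK]
  linear_combination q.imJ * sin_sq_add_cos_sq θ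

theorem imK_eI_mul_mul_eI : (eI θ * q * eI θ).imK = q.imK := by
  simp only [re_mul, imI_mul, imJ_mul, imK_mul, eI_re, eI_imI, eI_imJ, eI_imK]
  linear_combination q.imK * sin_sq_add_cos_sq θ

variable {θ}

theorem re_eq_zero_and_imI_eq_zero_of_eI_mul_mul_eI_eq (hθ : sin θ ≠ 0) {q : ℍ[ℝ]}
    (hq : eI θ * q * eI θ = q) : q.re = 0 ∧ q.imI = 0 := by
  have hre := congrArg QuaternionAlgebra.re hq
  have himI := congrArg QuaternionAlgebra.imI hq
  rw [re_eI_mul_mul_eI, cos_two_mul, sin_two_mul] at hre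
  rw [imI_eI_mul_mul_eI, cos_two_mul, sin_two_mul] at himI
  have hsc := sin_sq_add_cos_sq θ
  -- `hre`, `himI` say `(u² - 1) z = 0` with `u² - 1 = 2 sin θ · i u`
  have h₁ : sin θ * q.re + cos θ * q.imI = 0 :=
    mul_left_cancel₀ (mul_ne_zero two_ne_zero hθ) (by linear_combination -hre + 2 * q.re * hsc)
  have h₂ : cos θ * q.re - sin θ * q.imI = 0 :=
    mul_left_cancel₀ (mul_ne_zero two_ne_zero hθ) (by linear_combination himI - 2 * q.imI * hsc)
  constructor
  · linear_combination sin θ * h₁ + cos θ * h₂ - q.re * hsc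
  · linear_combination cos θ * h₁ - sin θ * h₂ - q.imI * hsc

theorem eq_zero_of_eI_mul_mul_eI_eq_of_eI_mul_add_eq (hθ : sin θ ≠ 0) {x y : ℍ[ℝ]}
    (hx : eI θ * x * eI θ = x) (hxy : eI θ * x + eI θ * y * eI θ = y) : x = 0 := by
  obtain ⟨hre, himI⟩ := re_eq_zero_and_imI_eq_zero_of_eI_mul_mul_eI_eq hθ hx
  have hux : eI θ * x = 0 := by
    have hjk : eI θ * x = y - eI θ * y * eI θ := eq_sub_of_add_eq hxy
    ext
    · simp [hre, himI]
    · simp [hre, himI]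
    · rw [hjk, imJ_sub, imJ_eI_mul_mul_eI, sub_self, imJ_zero]
    · rw [hjk, imK_sub, imK_eI_mul_mul_eI, sub_self, imK_zero]
  exact (mul_eq_zero.mp hux).resolve_left (eI_ne_zero θ)

end eI

theorem re_mul_self_nonpos {q : ℍ[ℝ]} (hq : q.re = 0) : (q * q).re ≤ 0 := by
  rw [re_mul, hq]
  nlinarith [sq_nonneg q.imI, sq_nonneg q.imJ, sq_nonneg q.imK]

/-- The parabolic [[e^{iθ},1],[0,e^{iθ}]] with θ ∈ (0,π) is not strongly reversible in
SL(2,ℍ): no involution g in SL(2,ℍ) (so g⁻¹ = g) conjugates it to its inverse. -/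
theorem not_strongly_reversible_parabolic (θ : ℝ) (hθ : θ ∈ Set.Ioo 0 Real.pi) :
    ¬ ∃ g B : Matrix (Fin 2) (Fin 2) (Quaternion ℝ),
        detH g = 1 ∧ g * g = 1 ∧
        !![eI θ, 1; 0, eI θ] * B = 1 ∧ B * !![eI θ, 1; 0, eI θ] = 1 ∧
        g * !![eI θ, 1; 0, eI θ] * g = B := by
  rintro ⟨g, B, -, hg, hAB, -, hconj⟩
  have hs : sin θ ≠ 0 := (sin_pos_of_pos_of_lt_pi hθ.1 hθ.2).ne'
  have hfix := mul_mul_eq_of_mul_self_eq_one_of_conj_eq_inv hg hAB hconj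
  have h₁₀ : eI θ * g 1 0 * eI θ = g 1 0 := by
    rw [← parabolic_mul_mul_parabolic_apply_one_zero, hfix]
  have h₁₁ : eI θ * g 1 0 + eI θ * g 1 1 * eI θ = g 1 1 := by
    rw [← parabolic_mul_mul_parabolic_apply_one_one, hfix]
  have hx : g 1 0 = 0 := eq_zero_of_eI_mul_mul_eI_eq_of_eI_mul_add_eq hs h₁₀ h₁₁
  have hy : g 1 1 * g 1 1 = 1 := by
    simpa [hx, Matrix.mul_apply, Fin.sum_univ_two] using congrFun (congrFun hg 1) 1
  have hy_re : (g 1 1).re = 0 :=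
    (re_eq_zero_and_imI_eq_zero_of_eI_mul_mul_eI_eq hs (by simpa [hx] using h₁₁)).1
  exact absurd (re_mul_self_nonpos hy_re) (by simp [hy])
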